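/- Fix κ ∈ (0,4), an integer N ≥ 1, set M = ⌊N/2⌋, and fix real numbers x₁ < x₂ < ⋯ < x_{N+1}. Then the integral W_N = ∫_{x_{N+1} < w₁ < ⋯ < w_{N-M}} ∏_{1≤i≤N, 1≤j≤N-M} (w_j - x_i)^{-4/κ} ∏_{1≤j≤N-M} (w_j - x_{N+1})^{(2-κ)/κ} ∏_{1≤i<j≤N-M} (w_j - w_i)^{8/κ} dw₁⋯dw_{N-M} is finite and strictly positive. -/
import Mathlib


open MeasureTheory Real Set

/-- Integrand of the partition function `W_N` (even-index hitting points). The points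
`x 0, …, x (N-1)` are `x₁, …, x_N` and `x (Fin.last N)` is `x_{N+1}`. -/
noncomputable def Wdens (κ : ℝ) (N K : ℕ) (x : Fin (N + 1) → ℝ) (w : Fin K → ℝ) : ℝ :=
  (∏ i : Fin N, ∏ j : Fin K, (w j - x i.castSucc) ^ (-4 / κ)) *
    (∏ j : Fin K, (w j - x (Fin.last N)) ^ ((2 - κ) / κ)) *
    ∏ p ∈ Finset.univ.filter (fun p : Fin K × Fin K => p.1 < p.2), (w p.2 - w p.1) ^ (8 / κ)

/-- The unbounded simplex `{x_{N+1} < w₁ < ⋯ < w_{N-M}}`. -/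
def Wdom (N K : ℕ) (x : Fin (N + 1) → ℝ) : Set (Fin K → ℝ) :=
  {w | (∀ j, x (Fin.last N) < w j) ∧ StrictMono w}

/-- The basic 1-dimensional integrability fact: `(1+s)^(-p) s^q` is integrable on `(0,∞)`
provided `q > -1` and `q - p < -1`. -/
lemma aux_oneD {p q : ℝ} (hp : 0 ≤ p) (hq : -1 < q) (hqp : q - p < -1) :
    IntegrableOn (fun s : ℝ => (1 + s) ^ (-p) * s ^ q) (Ioi (0 : ℝ)) := by
  have hmeas : Measurable fun s : ℝ => (1 + s) ^ (-p) * s ^ q :=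
    ((measurable_const.add measurable_id).pow measurable_const).mul
      (measurable_id.pow measurable_const)
  have h1 : IntegrableOn (fun s : ℝ => (1 + s) ^ (-p) * s ^ q) (Ioc (0 : ℝ) 1) := by
    have hint : IntegrableOn (fun s : ℝ => s ^ q) (Ioc (0 : ℝ) 1) := by
      rw [← intervalIntegrable_iff_integrableOn_Ioc_of_le zero_le_one]
      exact intervalIntegral.intervalIntegrable_rpow' hq
    refine Integrable.mono' hint hmeas.aestronglyMeasurable ?_
    refine (ae_restrict_iff' measurableSet_Ioc).2 (Filter.Eventually.of_forall fun s hs => ?_)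
    have hs0 : (0 : ℝ) < s := hs.1
    have h1s : (1 : ℝ) ≤ 1 + s := by linarith
    rw [Real.norm_eq_abs,
      abs_of_nonneg (mul_nonneg (rpow_nonneg (by linarith) _) (rpow_nonneg hs0.le _))]
    calc (1 + s) ^ (-p) * s ^ q
        ≤ 1 * s ^ q := by
          refine mul_le_mul_of_nonneg_right ?_ (rpow_nonneg hs0.le _)
          exact rpow_le_one_of_one_le_of_nonpos h1s (neg_nonpos.mpr hp)
      _ = s ^ q := one_mul _
  have h2 : IntegrableOn (fun s : ℝ => (1 + s) ^ (-p) * s ^ q) (Ioi (1 : ℝ)) := by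
    have hint : IntegrableOn (fun s : ℝ => s ^ (q - p)) (Ioi (1 : ℝ)) :=
      (integrableOn_Ioi_rpow_iff one_pos).2 hqp
    refine Integrable.mono' hint hmeas.aestronglyMeasurable ?_
    refine (ae_restrict_iff' measurableSet_Ioi).2 (Filter.Eventually.of_forall fun s hs => ?_)
    have hs1 : (1 : ℝ) < s := hs
    have hs0 : (0 : ℝ) < s := lt_trans one_pos hs1
    rw [Real.norm_eq_abs,
      abs_of_nonneg (mul_nonneg (rpow_nonneg (by linarith) _) (rpow_nonneg hs0.le _))]
    have hbase : (1 + s) ^ (-p) ≤ s ^ (-p) :=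
      rpow_le_rpow_of_nonpos hs0 (by linarith) (neg_nonpos.mpr hp)
    calc (1 + s) ^ (-p) * s ^ q
        ≤ s ^ (-p) * s ^ q := mul_le_mul_of_nonneg_right hbase (rpow_nonneg hs0.le _)
      _ = s ^ (q - p) := by rw [← Real.rpow_add hs0, neg_add_eq_sub]
  have hU : Ioi (0 : ℝ) = Ioc 0 1 ∪ Ioi 1 := (Ioc_union_Ioi_eq_Ioi zero_le_one).symm
  rw [hU]
  exact h1.union h2

/-- Translated version of `aux_oneD`. -/
lemma aux_oneD' (b : ℝ) {p q : ℝ} (hp : 0 ≤ p) (hq : -1 < q) (hqp : q - p < -1) :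
    IntegrableOn (fun t : ℝ => (1 + (t - b)) ^ (-p) * (t - b) ^ q) (Ioi b) := by
  have h0 := aux_oneD hp hq hqp
  have h1 : Integrable ((Ioi (0 : ℝ)).indicator fun s => (1 + s) ^ (-p) * s ^ q) :=
    (integrable_indicator_iff measurableSet_Ioi).2 h0
  have h2 := h1.comp_sub_right b
  have h3 : (fun t : ℝ => ((Ioi (0 : ℝ)).indicator fun s => (1 + s) ^ (-p) * s ^ q) (t - b))
      = (Ioi b).indicator fun t => (1 + (t - b)) ^ (-p) * (t - b) ^ q := by
    ext t
    simp only [Set.indicator_apply, mem_Ioi, sub_pos]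
  rw [h3] at h2
  exact (integrable_indicator_iff measurableSet_Ioi).1 h2

/-- Regrouping a product over ordered pairs into a product over the second coordinate. -/
lemma aux_pair_prod {K : ℕ} (f : Fin K → ℝ) :
    (∏ p ∈ Finset.univ.filter (fun p : Fin K × Fin K => p.1 < p.2), f p.2)
      = ∏ j : Fin K, f j ^ (j : ℕ) := by
  rw [Finset.prod_filter, ← Finset.univ_product_univ, Finset.prod_product, Finset.prod_comm]
  refine Finset.prod_congr rfl fun j _ => ?_
  show (∏ a : Fin K, if a < j then f j else 1) = f j ^ (j : ℕ)
  rw [← Finset.prod_filter (fun a : Fin K => a < j) (fun _ : Fin K => f j), Finset.prod_const]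
  congr 1
  have h : (Finset.univ.filter fun i : Fin K => i < j) = Finset.Iio j := by
    ext i; simp
  rw [h, Fin.card_Iio]

/-- The key pointwise bound: on the simplex, the density is bounded by a product of
one-variable functions. -/
lemma aux_wdens_le {κ : ℝ} (hκ0 : 0 < κ) {N K : ℕ}
    {x : Fin (N + 1) → ℝ} (hx : StrictMono x)
    {w : Fin K → ℝ} (hw : w ∈ Wdom N K x) :
    Wdens κ N K x w ≤ ∏ j : Fin K,
      ((∏ i : Fin N,
          ((x (Fin.last N) - x i.castSucc) / (1 + (x (Fin.last N) - x i.castSucc))) ^ (-4 / κ)) *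
        ((1 + (w j - x (Fin.last N))) ^ (-(4 * N / κ)) *
          (w j - x (Fin.last N)) ^ ((2 - κ) / κ + 8 / κ * (j : ℕ)))) := by
  obtain ⟨hw1, hw2⟩ := hw
  set b := x (Fin.last N) with hbdef
  have hd : ∀ i : Fin N, 0 < b - x i.castSucc := fun i =>
    sub_pos.2 (hx (Fin.castSucc_lt_last i))
  have hs : ∀ j : Fin K, 0 < w j - b := fun j => sub_pos.2 (hw1 j)
  have hexp : (-4 : ℝ) / κ ≤ 0 := by
    rw [div_nonpos_iff]; right; constructor <;> linarith
  set c : Fin N → ℝ := fun i => ((b - x i.castSucc) / (1 + (b - x i.castSucc))) ^ (-4 / κ)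
    with hc
  set v : Fin K → ℝ := fun j => (1 + (w j - b)) ^ (-4 / κ) with hv
  have hcv : ∀ (i : Fin N) (j : Fin K),
      (w j - x i.castSucc) ^ (-4 / κ) ≤ c i * v j := by
    intro i j
    have hdi := hd i
    have hsj := hs j
    have h1d : (0 : ℝ) < 1 + (b - x i.castSucc) := by linarith
    have h1s : (0 : ℝ) < 1 + (w j - b) := by linarith
    have key : (b - x i.castSucc) / (1 + (b - x i.castSucc)) * (1 + (w j - b))
        ≤ w j - x i.castSucc := by
      rw [div_mul_eq_mul_div, div_le_iff₀ h1d]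
      nlinarith
    have hpos : 0 < (b - x i.castSucc) / (1 + (b - x i.castSucc)) * (1 + (w j - b)) :=
      mul_pos (div_pos hdi h1d) h1s
    calc (w j - x i.castSucc) ^ (-4 / κ)
        ≤ ((b - x i.castSucc) / (1 + (b - x i.castSucc)) * (1 + (w j - b))) ^ (-4 / κ) :=
          rpow_le_rpow_of_nonpos hpos key hexp
      _ = c i * v j :=
          mul_rpow (div_pos hdi h1d).le h1s.le
  -- bound for the first product
  have hA : (∏ i : Fin N, ∏ j : Fin K, (w j - x i.castSucc) ^ (-4 / κ))
      ≤ ∏ j : Fin K, ((∏ i : Fin N, c i) * v j ^ (N : ℕ)) := by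
    have step1 : (∏ i : Fin N, ∏ j : Fin K, (w j - x i.castSucc) ^ (-4 / κ))
        ≤ ∏ i : Fin N, ∏ j : Fin K, (c i * v j) := by
      refine Finset.prod_le_prod (fun i _ => Finset.prod_nonneg fun j _ => rpow_nonneg ?_ _)
        (fun i _ => Finset.prod_le_prod (fun j _ => rpow_nonneg ?_ _) fun j _ => hcv i j)
      · have := hd i; have := hs j; linarith
      · have := hd i; have := hs j; linarith
    refine step1.trans_eq ?_
    rw [Finset.prod_comm]
    refine Finset.prod_congr rfl fun j _ => ?_
    rw [Finset.prod_mul_distrib, Finset.prod_const, Finset.card_univ, Fintype.card_fin]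
  -- bound for the pair product
  have hP : (∏ p ∈ Finset.univ.filter (fun p : Fin K × Fin K => p.1 < p.2),
        (w p.2 - w p.1) ^ (8 / κ))
      ≤ ∏ j : Fin K, ((w j - b) ^ (8 / κ)) ^ (j : ℕ) := by
    rw [← aux_pair_prod fun j => (w j - b) ^ (8 / κ)]
    refine Finset.prod_le_prod (fun p hp => rpow_nonneg ?_ _) fun p hp => ?_
    · have := hw2 (Finset.mem_filter.1 hp).2; linarith
    · refine rpow_le_rpow ?_ ?_ (by positivity)
      · have := hw2 (Finset.mem_filter.1 hp).2; linarith
      · have := hw1 p.1; linarith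
  -- nonnegativity facts
  have hAnn : 0 ≤ ∏ j : Fin K, ((∏ i : Fin N, c i) * v j ^ (N : ℕ)) := by
    refine Finset.prod_nonneg fun j _ => mul_nonneg (Finset.prod_nonneg fun i _ => ?_) ?_
    · exact rpow_nonneg (div_pos (hd i) (by have := hd i; linarith)).le _
    · exact pow_nonneg (rpow_nonneg (by have := hs j; linarith) _) _
  have hBnn : 0 ≤ ∏ j : Fin K, (w j - b) ^ ((2 - κ) / κ) :=
    Finset.prod_nonneg fun j _ => rpow_nonneg (hs j).le _
  have hPnn : 0 ≤ ∏ p ∈ Finset.univ.filter (fun p : Fin K × Fin K => p.1 < p.2),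
      (w p.2 - w p.1) ^ (8 / κ) := by
    refine Finset.prod_nonneg fun p hp => rpow_nonneg ?_ _
    have := hw2 (Finset.mem_filter.1 hp).2; linarith
  have hABnn : 0 ≤ (∏ i : Fin N, ∏ j : Fin K, (w j - x i.castSucc) ^ (-4 / κ))
      * ∏ j : Fin K, (w j - b) ^ ((2 - κ) / κ) := by
    refine mul_nonneg (Finset.prod_nonneg fun i _ => Finset.prod_nonneg fun j _ =>
      rpow_nonneg ?_ _) hBnn
    have := hd i; have := hs j; linarith
  have main : Wdens κ N K x w ≤
      (∏ j : Fin K, ((∏ i : Fin N, c i) * v j ^ (N : ℕ)))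
        * (∏ j : Fin K, (w j - b) ^ ((2 - κ) / κ))
        * ∏ j : Fin K, ((w j - b) ^ (8 / κ)) ^ (j : ℕ) := by
    unfold Wdens
    exact mul_le_mul (mul_le_mul hA le_rfl hBnn hAnn) hP hPnn (mul_nonneg hAnn hBnn)
  refine main.trans_eq ?_
  rw [← Finset.prod_mul_distrib, ← Finset.prod_mul_distrib]
  refine Finset.prod_congr rfl fun j _ => ?_
  have hvN : v j ^ (N : ℕ) = (1 + (w j - b)) ^ (-(4 * (N : ℝ) / κ)) := by
    rw [hv]
    rw [← Real.rpow_natCast ((1 + (w j - b)) ^ (-4 / κ)) N,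
      ← Real.rpow_mul (by have := hs j; linarith : (0:ℝ) ≤ 1 + (w j - b))]
    congr 1
    ring
  have hmerge : (w j - b) ^ ((2 - κ) / κ) * ((w j - b) ^ (8 / κ)) ^ (j : ℕ)
      = (w j - b) ^ ((2 - κ) / κ + 8 / κ * (j : ℕ)) := by
    rw [← Real.rpow_natCast ((w j - b) ^ (8 / κ)) (j : ℕ),
      ← Real.rpow_mul (hs j).le, ← Real.rpow_add (hs j)]
  calc (∏ i : Fin N, c i) * v j ^ (N : ℕ) * (w j - b) ^ ((2 - κ) / κ)
        * ((w j - b) ^ (8 / κ)) ^ (j : ℕ)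
      = (∏ i : Fin N, c i) * (v j ^ (N : ℕ)
          * ((w j - b) ^ ((2 - κ) / κ) * ((w j - b) ^ (8 / κ)) ^ (j : ℕ))) := by ring
    _ = (∏ i : Fin N, c i) * ((1 + (w j - b)) ^ (-(4 * (N : ℝ) / κ))
          * (w j - b) ^ ((2 - κ) / κ + 8 / κ * (j : ℕ))) := by rw [hvN, hmerge]

theorem stmt3 (κ : ℝ) (hκ : κ ∈ Set.Ioo (0:ℝ) 4) (N : ℕ) (hN : 1 ≤ N)
    (x : Fin (N + 1) → ℝ) (hx : StrictMono x) :
    IntegrableOn (Wdens κ N (N - N / 2) x) (Wdom N (N - N / 2) x) volume ∧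
    0 < ∫ w in Wdom N (N - N / 2) x, Wdens κ N (N - N / 2) x w := by
  obtain ⟨hκ0, hκ4⟩ := hκ
  set K := N - N / 2 with hKdef
  set b := x (Fin.last N) with hbdef
  -- exponent facts
  have hp : (0 : ℝ) ≤ 4 * N / κ := by positivity
  have hq : ∀ j : Fin K, (-1 : ℝ) < (2 - κ) / κ + 8 / κ * (j : ℕ) := by
    intro j
    have h1 : (-1 : ℝ) < (2 - κ) / κ := by
      rw [lt_div_iff₀ hκ0]; linarith
    have h2 : (0 : ℝ) ≤ 8 / κ * (j : ℕ) := by positivity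
    linarith
  have hqp : ∀ j : Fin K, ((2 - κ) / κ + 8 / κ * (j : ℕ)) - 4 * N / κ < -1 := by
    intro j
    have hj : 8 * (j : ℕ) + 2 < 4 * N := by
      have := j.isLt
      omega
    have hjR : (8 * (j : ℕ) + 2 : ℝ) < 4 * N := by exact_mod_cast hj
    have he : (2 - κ) / κ + 8 / κ * (j : ℕ) - 4 * N / κ
        = (2 - κ + 8 * (j : ℕ) - 4 * N) / κ := by
      field_simp
    rw [he, div_lt_iff₀ hκ0]
    linarith
  -- the dominating one-variable functions
  set C1 : ℝ := ∏ i : Fin N, ((b - x i.castSucc) / (1 + (b - x i.castSucc))) ^ (-4 / κ)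
    with hC1
  set g : Fin K → ℝ → ℝ := fun j t =>
    C1 * ((1 + (t - b)) ^ (-(4 * (N : ℝ) / κ)) * (t - b) ^ ((2 - κ) / κ + 8 / κ * (j : ℕ)))
    with hg
  have hgint : ∀ j : Fin K, IntegrableOn (g j) (Ioi b) := by
    intro j
    exact (aux_oneD' b hp (hq j) (hqp j)).const_mul C1
  have hGint : Integrable (fun w : Fin K → ℝ => ∏ j, (Ioi b).indicator (g j) (w j)) :=
    Integrable.fintype_prod fun j => (integrable_indicator_iff measurableSet_Ioi).2 (hgint j)
  -- measurability of the density
  have hmeas : Measurable (Wdens κ N K x) := by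
    unfold Wdens
    refine ((Finset.measurable_prod _ fun i _ => Finset.measurable_prod _ fun j _ => ?_).mul
      (Finset.measurable_prod _ fun j _ => ?_)).mul
      (Finset.measurable_prod _ fun p _ => ?_)
    · exact ((measurable_pi_apply j).sub_const _).pow measurable_const
    · exact ((measurable_pi_apply j).sub_const _).pow measurable_const
    · exact ((measurable_pi_apply p.2).sub (measurable_pi_apply p.1)).pow measurable_const
  -- the domain is open
  have hopen : IsOpen (Wdom N K x) := by
    have h1 : IsOpen {w : Fin K → ℝ | ∀ j, b < w j} := by
      rw [setOf_forall]
      exact isOpen_iInter_of_finite fun j => isOpen_lt continuous_const (continuous_apply j)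
    have h2 : IsOpen {w : Fin K → ℝ | StrictMono w} := by
      have hset : {w : Fin K → ℝ | StrictMono w}
          = ⋂ (i : Fin K), ⋂ (j : Fin K), ⋂ (_ : i < j), {w : Fin K → ℝ | w i < w j} := by
        ext w
        constructor
        · intro h
          simp only [mem_iInter, mem_setOf_eq]
          intro i j hij; exact h hij
        · intro h a c hac
          simp only [mem_iInter, mem_setOf_eq] at h
          exact h a c hac
      rw [hset]
      exact isOpen_iInter_of_finite fun i => isOpen_iInter_of_finite fun j =>
        isOpen_iInter_of_finite fun _ => isOpen_lt (continuous_apply i) (continuous_apply j)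
    have : Wdom N K x = {w : Fin K → ℝ | ∀ j, b < w j} ∩ {w : Fin K → ℝ | StrictMono w} := by
      ext w; simp [Wdom, hbdef, mem_setOf_eq]
    rw [this]
    exact h1.inter h2
  -- positivity of the density on the domain
  have hpos : ∀ w ∈ Wdom N K x, 0 < Wdens κ N K x w := by
    intro w hw
    obtain ⟨hw1, hw2⟩ := hw
    refine mul_pos (mul_pos ?_ ?_) ?_
    · refine Finset.prod_pos fun i _ => Finset.prod_pos fun j _ => rpow_pos_of_pos ?_ _
      have h1 := hx (Fin.castSucc_lt_last i)
      have h2 := hw1 j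
      exact sub_pos.2 (h1.trans h2)
    · exact Finset.prod_pos fun j _ => rpow_pos_of_pos (sub_pos.2 (hw1 j)) _
    · refine Finset.prod_pos fun p hp => rpow_pos_of_pos ?_ _
      exact sub_pos.2 (hw2 (Finset.mem_filter.1 hp).2)
  -- pointwise bound on the domain
  have hbound : ∀ w ∈ Wdom N K x,
      Wdens κ N K x w ≤ ∏ j, (Ioi b).indicator (g j) (w j) := by
    intro w hw
    have h := aux_wdens_le hκ0 hx hw
    have heq : (∏ j, (Ioi b).indicator (g j) (w j)) = ∏ j : Fin K,
        (C1 * ((1 + (w j - b)) ^ (-(4 * (N : ℝ) / κ))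
          * (w j - b) ^ ((2 - κ) / κ + 8 / κ * (j : ℕ)))) := by
      refine Finset.prod_congr rfl fun j _ => ?_
      rw [Set.indicator_of_mem (mem_Ioi.2 (hw.1 j))]
    rw [heq]
    exact h
  -- integrability
  have hIntOn : IntegrableOn (Wdens κ N K x) (Wdom N K x) volume := by
    refine Integrable.mono' hGint.integrableOn hmeas.aestronglyMeasurable ?_
    refine (ae_restrict_iff' hopen.measurableSet).2 (Filter.Eventually.of_forall fun w hw => ?_)
    rw [Real.norm_eq_abs, abs_of_pos (hpos w hw)]
    exact hbound w hw
  refine ⟨hIntOn, ?_⟩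
  -- positivity of the integral
  have hnn : 0 ≤ᵐ[volume.restrict (Wdom N K x)] Wdens κ N K x :=
    (ae_restrict_iff' hopen.measurableSet).2 (Filter.Eventually.of_forall fun w hw =>
      (hpos w hw).le)
  rw [setIntegral_pos_iff_support_of_nonneg_ae hnn hIntOn]
  have hne : (Wdom N K x).Nonempty := by
    refine ⟨fun j => b + 1 + (j : ℕ), fun j => ?_, fun a c hac => ?_⟩
    · show b < b + 1 + ((j : ℕ) : ℝ)
      have : (0 : ℝ) ≤ (j : ℕ) := Nat.cast_nonneg _
      linarith
    · show b + 1 + ((a : ℕ) : ℝ) < b + 1 + ((c : ℕ) : ℝ)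
      have : ((a : ℕ) : ℝ) < ((c : ℕ) : ℝ) := by exact_mod_cast hac
      linarith
  refine lt_of_lt_of_le (hopen.measure_pos volume hne) (measure_mono fun w hw => ?_)
  exact ⟨ne_of_gt (hpos w hw), hw⟩
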